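/- arXiv:2202.01123 — 6 statements merged into one kernel-verified Lean document; each statement's English description precedes it below -/
import Mathlib

section
/- Let K be a weighted G_n LC knowledge base and let φ : ℝ → [0,1] be a monotonically non-decreasing function. Then every φ-coherent multipreference model of K is also a faithful multipreference model of K. -/
/-- Concepts of the boolean description logic LC. -/
inductive LC (NC : Type) : Type where
  | top : LC NC
  | bot : LC NC
  | nm : NC → LC NC
  | inter : LC NC → LC NC → LC NC
  | union : LC NC → LC NC → LC NC
  | compl : LC NC → LC NC

/-- The concept names occurring in a concept. -/
def LC.names {NC : Type} : LC NC → Set NC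
  | .top => ∅
  | .bot => ∅
  | .nm A => {A}
  | .inter C D => C.names ∪ D.names
  | .union C D => C.names ∪ D.names
  | .compl C => C.names

/-- The finite truth space C_n = {0, 1/n, ..., (n-1)/n, 1} ⊆ [0,1]. -/
def Cn (n : ℕ) : Set ℝ := {r : ℝ | ∃ i : ℕ, i ≤ n ∧ r = (i : ℝ) / (n : ℝ)}

/-- Gödel-semantics evaluation of LC concepts (with involutive negation). -/
def gval {NC Δ : Type} (v : NC → Δ → ℝ) : LC NC → Δ → ℝ
  | .top => fun _ => 1
  | .bot => fun _ => 0
  | .nm A => v A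
  | .inter C D => fun x => min (gval v C x) (gval v D x)
  | .union C D => fun x => max (gval v C x) (gval v D x)
  | .compl C => fun x => 1 - gval v C x

/-- Comparison operators θ ∈ {≥, ≤, >, <}. -/
inductive Ineq : Type where
  | ge : Ineq
  | le : Ineq
  | gt : Ineq
  | lt : Ineq

def Ineq.holds : Ineq → ℝ → ℝ → Prop
  | .ge, a, b => a ≥ b
  | .le, a, b => a ≤ b
  | .gt, a, b => a > b
  | .lt, a, b => a < b

/-- A weighted LC knowledge base over distinguished concepts C_1, …, C_k:
a TBox of graded inclusions, an ABox of graded assertions, and for each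
distinguished concept `Ci i` a finite set of weighted typicality inclusions
T(Ci i) ⊑ D i h with real weight w i h. -/
structure WKB (NC NI : Type) : Type where
  k : ℕ
  Ci : Fin k → LC NC
  H : Fin k → ℕ
  D : (i : Fin k) → Fin (H i) → LC NC
  w : (i : Fin k) → Fin (H i) → ℝ
  tbox : List (LC NC × LC NC × Ineq × ℝ)
  abox : List (LC NC × NI × Ineq × ℝ)
  tbox_bound : ∀ t ∈ tbox, t.2.2.2 ∈ Set.Icc (0 : ℝ) 1
  abox_bound : ∀ t ∈ abox, t.2.2.2 ∈ Set.Icc (0 : ℝ) 1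

/-- The concept names occurring in the knowledge base K. -/
def WKB.names {NC NI : Type} (K : WKB NC NI) : Set NC :=
  (⋃ i : Fin K.k, (K.Ci i).names) ∪
    (⋃ i : Fin K.k, ⋃ h : Fin (K.H i), (K.D i h).names) ∪
    (⋃ t ∈ K.tbox, t.1.names ∪ t.2.1.names) ∪
    (⋃ t ∈ K.abox, t.1.names)

/-- A finitely many-valued interpretation: concept names take values in C_n. -/
def IsInterp {NC Δ : Type} (n : ℕ) (val : NC → Δ → ℝ) : Prop :=
  ∀ A x, val A x ∈ Cn n

/-- Gödel implication: a ▷ b = 1 if a ≤ b, and b otherwise. -/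
noncomputable def gimp (a b : ℝ) : ℝ := if a ≤ b then 1 else b

/-- Satisfaction of the TBox: for every inclusion C ⊑ D θ α,
(inf_x C(x) ▷ D(x)) θ α holds. -/
def SatTBoxG {NC NI Δ : Type} (K : WKB NC NI) (val : NC → Δ → ℝ) : Prop :=
  ∀ t ∈ K.tbox,
    Ineq.holds t.2.2.1 (⨅ x : Δ, gimp (gval val t.1 x) (gval val t.2.1 x)) t.2.2.2

/-- Satisfaction of the ABox: for every assertion C(a) θ α, C(a^I) θ α holds. -/
def SatABoxG {NC NI Δ : Type} (K : WKB NC NI) (val : NC → Δ → ℝ) (ind : NI → Δ) : Prop :=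
  ∀ t ∈ K.abox, Ineq.holds t.2.2.1 (gval val t.1 (ind t.2.1)) t.2.2.2

/-- The weighted sum Σ_h w_{i,h} · D_{i,h}(x). -/
noncomputable def sumwG {NC NI Δ : Type} (K : WKB NC NI) (val : NC → Δ → ℝ)
    (i : Fin K.k) (x : Δ) : ℝ :=
  ∑ h : Fin (K.H i), K.w i h * gval val (K.D i h) x

/-- The weight W_i(x) ∈ ℝ ∪ {−∞} of x w.r.t. the distinguished concept C_i. -/
noncomputable def WgtG {NC NI Δ : Type} (K : WKB NC NI) (val : NC → Δ → ℝ)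
    (i : Fin K.k) (x : Δ) : EReal :=
  if 0 < gval val (K.Ci i) x then ((sumwG K val i x : ℝ) : EReal) else ⊥

/-- Faithful multipreference model: an interpretation satisfying the TBox and the
ABox such that x <_{C_i} y implies W_i(x) > W_i(y). -/
def IsFaithfulModelG {NC NI Δ : Type} (n : ℕ) (K : WKB NC NI)
    (val : NC → Δ → ℝ) (ind : NI → Δ) : Prop :=
  IsInterp n val ∧ SatTBoxG K val ∧ SatABoxG K val ind ∧
    ∀ (i : Fin K.k) (x y : Δ),
      gval val (K.Ci i) x > gval val (K.Ci i) y → WgtG K val i x > WgtG K val i y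

/-- Coherent multipreference model: an interpretation satisfying the TBox and the
ABox such that x <_{C_i} y iff W_i(x) > W_i(y). -/
def IsCoherentModelG {NC NI Δ : Type} (n : ℕ) (K : WKB NC NI)
    (val : NC → Δ → ℝ) (ind : NI → Δ) : Prop :=
  IsInterp n val ∧ SatTBoxG K val ∧ SatABoxG K val ind ∧
    ∀ (i : Fin K.k) (x y : Δ),
      (gval val (K.Ci i) x > gval val (K.Ci i) y ↔ WgtG K val i x > WgtG K val i y)

/-- φ-coherent multipreference model: an interpretation satisfying the TBox and
the ABox such that C_i(x) = φ(Σ_h w_{i,h} · D_{i,h}(x)) for all i and x. -/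
def IsPhiCoherentModelG {NC NI Δ : Type} (n : ℕ) (K : WKB NC NI) (φ : ℝ → ℝ)
    (val : NC → Δ → ℝ) (ind : NI → Δ) : Prop :=
  IsInterp n val ∧ SatTBoxG K val ∧ SatABoxG K val ind ∧
    ∀ (i : Fin K.k) (x : Δ), gval val (K.Ci i) x = φ (sumwG K val i x)

/-- If φ : ℝ → [0,1] is monotonically non-decreasing, then every φ-coherent
multipreference model of a weighted G_n LC knowledge base K is also a faithful
multipreference model of K. -/
theorem phiCoherent_implies_faithful_godel
    {NC NI Δ : Type} [Nonempty Δ] (n : ℕ) (hn : 1 ≤ n) (K : WKB NC NI)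
    (φ : ℝ → ℝ) (hφrange : ∀ x : ℝ, φ x ∈ Set.Icc (0 : ℝ) 1) (hφmono : Monotone φ)
    (val : NC → Δ → ℝ) (ind : NI → Δ)
    (h : IsPhiCoherentModelG n K φ val ind) :
    IsFaithfulModelG n K val ind := by
  obtain ⟨hI, hT, hA, hc⟩ := h
  refine ⟨hI, hT, hA, fun i x y hxy => ?_⟩
  have hSxy : sumwG K val i x > sumwG K val i y := by
    by_contra hle
    push_neg at hle
    have := hφmono hle
    rw [← hc i x, ← hc i y] at this
    exact absurd hxy (not_lt.mpr this)
  have hx0 : 0 < gval val (K.Ci i) x := by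
    have hy0 : 0 ≤ gval val (K.Ci i) y := by
      rw [hc i y]; exact (hφrange _).1
    linarith
  unfold WgtG
  rw [if_pos hx0]
  by_cases hy0 : 0 < gval val (K.Ci i) y
  · rw [if_pos hy0]
    exact_mod_cast hSxy
  · rw [if_neg hy0]
    exact EReal.bot_lt_coe _
end

section
/- Let K be a weighted G_n LC knowledge base and let φ : ℝ → [0,1] be a monotonically (strictly) increasing function. Then every φ-coherent multipreference model of K is also a coherent multipreference model of K. -/
/-- If φ : ℝ → [0,1] is monotonically (strictly) increasing, then every
φ-coherent multipreference model of a weighted G_n LC knowledge base K is also a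
coherent multipreference model of K. -/
theorem phiCoherent_implies_coherent_godel
    {NC NI Δ : Type} [Nonempty Δ] (n : ℕ) (hn : 1 ≤ n) (K : WKB NC NI)
    (φ : ℝ → ℝ) (hφrange : ∀ x : ℝ, φ x ∈ Set.Icc (0 : ℝ) 1) (hφmono : StrictMono φ)
    (val : NC → Δ → ℝ) (ind : NI → Δ)
    (h : IsPhiCoherentModelG n K φ val ind) :
    IsCoherentModelG n K val ind := by
  obtain ⟨hI, hT, hA, hφc⟩ := h
  refine ⟨hI, hT, hA, fun i x y => ?_⟩
  constructor
  · intro hxy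
    have hypos : (0:ℝ) ≤ gval val (K.Ci i) y := by
      rw [hφc i y]; exact (hφrange _).1
    have hxpos : 0 < gval val (K.Ci i) x := lt_of_le_of_lt hypos hxy
    have hs : sumwG K val i y < sumwG K val i x := by
      apply hφmono.lt_iff_lt.mp
      rw [← hφc i x, ← hφc i y]; exact hxy
    unfold WgtG
    rw [if_pos hxpos]
    by_cases hy : 0 < gval val (K.Ci i) y
    · rw [if_pos hy]; exact_mod_cast hs
    · rw [if_neg hy]; exact EReal.bot_lt_coe _
  · intro hW
    unfold WgtG at hW
    by_cases hx : 0 < gval val (K.Ci i) x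
    · rw [if_pos hx] at hW
      by_cases hy : 0 < gval val (K.Ci i) y
      · rw [if_pos hy] at hW
        have hs : sumwG K val i y < sumwG K val i x := by exact_mod_cast hW
        have := hφmono hs
        rwa [← hφc i x, ← hφc i y] at this
      · have hy0 : gval val (K.Ci i) y ≤ 0 := le_of_not_gt hy
        exact lt_of_le_of_lt hy0 hx
    · rw [if_neg hx] at hW
      exact absurd hW (not_lt_bot)
end

section
/- Let K be a weighted Ł_n LC knowledge base and let φ : ℝ → [0,1] be a monotonically non-decreasing function. Then every φ-coherent multipreference model of K is also a faithful multipreference model of K. -/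
/-- Łukasiewicz-semantics evaluation of LC concepts. -/
def lval {NC Δ : Type} (v : NC → Δ → ℝ) : LC NC → Δ → ℝ
  | .top => fun _ => 1
  | .bot => fun _ => 0
  | .nm A => v A
  | .inter C D => fun x => max (lval v C x + lval v D x - 1) 0
  | .union C D => fun x => min (lval v C x + lval v D x) 1
  | .compl C => fun x => 1 - lval v C x

/-- Łukasiewicz implication: a ▷ b = min (1 - a + b) 1. -/
noncomputable def limp (a b : ℝ) : ℝ := min (1 - a + b) 1

/-- Satisfaction of the TBox: for every inclusion C ⊑ D θ α,
(inf_x C(x) ▷ D(x)) θ α holds. -/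
def SatTBoxL {NC NI Δ : Type} (K : WKB NC NI) (val : NC → Δ → ℝ) : Prop :=
  ∀ t ∈ K.tbox,
    Ineq.holds t.2.2.1 (⨅ x : Δ, limp (lval val t.1 x) (lval val t.2.1 x)) t.2.2.2

/-- Satisfaction of the ABox: for every assertion C(a) θ α, C(a^I) θ α holds. -/
def SatABoxL {NC NI Δ : Type} (K : WKB NC NI) (val : NC → Δ → ℝ) (ind : NI → Δ) : Prop :=
  ∀ t ∈ K.abox, Ineq.holds t.2.2.1 (lval val t.1 (ind t.2.1)) t.2.2.2

/-- The weighted sum Σ_h w_{i,h} · D_{i,h}(x). -/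
noncomputable def sumwL {NC NI Δ : Type} (K : WKB NC NI) (val : NC → Δ → ℝ)
    (i : Fin K.k) (x : Δ) : ℝ :=
  ∑ h : Fin (K.H i), K.w i h * lval val (K.D i h) x

/-- The weight W_i(x) ∈ ℝ ∪ {−∞} of x w.r.t. the distinguished concept C_i. -/
noncomputable def WgtL {NC NI Δ : Type} (K : WKB NC NI) (val : NC → Δ → ℝ)
    (i : Fin K.k) (x : Δ) : EReal :=
  if 0 < lval val (K.Ci i) x then ((sumwL K val i x : ℝ) : EReal) else ⊥

/-- Faithful multipreference model: an interpretation satisfying the TBox and the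
ABox such that x <_{C_i} y implies W_i(x) > W_i(y). -/
def IsFaithfulModelL {NC NI Δ : Type} (n : ℕ) (K : WKB NC NI)
    (val : NC → Δ → ℝ) (ind : NI → Δ) : Prop :=
  IsInterp n val ∧ SatTBoxL K val ∧ SatABoxL K val ind ∧
    ∀ (i : Fin K.k) (x y : Δ),
      lval val (K.Ci i) x > lval val (K.Ci i) y → WgtL K val i x > WgtL K val i y

/-- Coherent multipreference model: an interpretation satisfying the TBox and the
ABox such that x <_{C_i} y iff W_i(x) > W_i(y). -/
def IsCoherentModelL {NC NI Δ : Type} (n : ℕ) (K : WKB NC NI)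
    (val : NC → Δ → ℝ) (ind : NI → Δ) : Prop :=
  IsInterp n val ∧ SatTBoxL K val ∧ SatABoxL K val ind ∧
    ∀ (i : Fin K.k) (x y : Δ),
      (lval val (K.Ci i) x > lval val (K.Ci i) y ↔ WgtL K val i x > WgtL K val i y)

/-- φ-coherent multipreference model: an interpretation satisfying the TBox and
the ABox such that C_i(x) = φ(Σ_h w_{i,h} · D_{i,h}(x)) for all i and x. -/
def IsPhiCoherentModelL {NC NI Δ : Type} (n : ℕ) (K : WKB NC NI) (φ : ℝ → ℝ)
    (val : NC → Δ → ℝ) (ind : NI → Δ) : Prop :=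
  IsInterp n val ∧ SatTBoxL K val ∧ SatABoxL K val ind ∧
    ∀ (i : Fin K.k) (x : Δ), lval val (K.Ci i) x = φ (sumwL K val i x)

/-- If φ : ℝ → [0,1] is monotonically non-decreasing, then every φ-coherent
multipreference model of a weighted Ł_n LC knowledge base K is also a faithful
multipreference model of K. -/
theorem phiCoherent_implies_faithful_lukasiewicz
    {NC NI Δ : Type} [Nonempty Δ] (n : ℕ) (hn : 1 ≤ n) (K : WKB NC NI)
    (φ : ℝ → ℝ) (hφrange : ∀ x : ℝ, φ x ∈ Set.Icc (0 : ℝ) 1) (hφmono : Monotone φ)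
    (val : NC → Δ → ℝ) (ind : NI → Δ)
    (h : IsPhiCoherentModelL n K φ val ind) :
    IsFaithfulModelL n K val ind := by
  obtain ⟨h1, h2, h3, h4⟩ := h
  refine ⟨h1, h2, h3, ?_⟩
  intro i x y hxy
  have hx := h4 i x
  have hy := h4 i y
  have hsum : sumwL K val i y < sumwL K val i x := by
    by_contra hle
    push_neg at hle
    have := hφmono hle
    rw [← hx, ← hy] at this
    linarith
  have hx0 : 0 < lval val (K.Ci i) x := by
    have := (hφrange (sumwL K val i y)).1
    rw [← hy] at this
    linarith
  rw [WgtL, if_pos hx0]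
  by_cases hy0 : 0 < lval val (K.Ci i) y
  · rw [WgtL, if_pos hy0]
    exact_mod_cast hsum
  · rw [WgtL, if_neg hy0]
    exact EReal.bot_lt_coe _
end

section
/- Let K be a weighted Ł_n LC knowledge base and let φ : ℝ → [0,1] be a monotonically (strictly) increasing function. Then every φ-coherent multipreference model of K is also a coherent multipreference model of K. -/
/-- If φ : ℝ → [0,1] is monotonically (strictly) increasing, then every
φ-coherent multipreference model of a weighted Ł_n LC knowledge base K is also a
coherent multipreference model of K. -/
theorem phiCoherent_implies_coherent_lukasiewicz
    {NC NI Δ : Type} [Nonempty Δ] (n : ℕ) (hn : 1 ≤ n) (K : WKB NC NI)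
    (φ : ℝ → ℝ) (hφrange : ∀ x : ℝ, φ x ∈ Set.Icc (0 : ℝ) 1) (hφmono : StrictMono φ)
    (val : NC → Δ → ℝ) (ind : NI → Δ)
    (h : IsPhiCoherentModelL n K φ val ind) :
    IsCoherentModelL n K val ind := by
  obtain ⟨hI, hT, hA, hφ⟩ := h
  refine ⟨hI, hT, hA, fun i x y => ?_⟩
  have hx := hφ i x
  have hy := hφ i y
  constructor
  · intro hlt
    have hx0 : 0 < lval val (K.Ci i) x := by
      have := (hφrange (sumwL K val i y)).1
      rw [← hy] at this
      linarith
    have hS : sumwL K val i x > sumwL K val i y := by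
      rw [hx, hy] at hlt
      exact hφmono.lt_iff_lt.mp hlt
    rw [WgtL, WgtL, if_pos hx0]
    split
    · exact_mod_cast hS
    · exact EReal.bot_lt_coe _
  · intro hW
    rw [WgtL, WgtL] at hW
    have hx0 : 0 < lval val (K.Ci i) x := by
      by_contra hc
      rw [if_neg hc] at hW
      exact absurd hW (by simp)
    rw [if_pos hx0] at hW
    by_cases hy0 : 0 < lval val (K.Ci i) y
    · rw [if_pos hy0] at hW
      have hS : sumwL K val i y < sumwL K val i x := by exact_mod_cast hW
      rw [hx, hy]
      exact hφmono hS
    · have : lval val (K.Ci i) y = 0 := by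
        have := (hφrange (sumwL K val i y)).1
        rw [← hy] at this
        linarith [not_lt.mp hy0]
      rw [this]; exact hx0
end

section
/- Let φ : ℝ → [0,1] be monotonically non-decreasing and let φ_n be its approximation into C_n. Then every φ_n-coherent multipreference model of a weighted G_n LC knowledge base K (i.e., a model satisfying the coherence equation with φ_n in place of φ) is a faithful multipreference model of K. -/
/-- ψ is the approximation φ_n of φ into C_n:
φ_n(x) = 0 if φ(x) ≤ 1/(2n); φ_n(x) = i/n if (2i−1)/(2n) < φ(x) ≤ (2i+1)/(2n)
for 0 < i < n; φ_n(x) = 1 if (2n−1)/(2n) < φ(x). -/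
def IsApprox (n : ℕ) (φ ψ : ℝ → ℝ) : Prop :=
  (∀ x : ℝ, φ x ≤ 1 / (2 * (n : ℝ)) → ψ x = 0) ∧
  (∀ x : ℝ, ∀ i : ℕ, 0 < i → i < n →
      (2 * (i : ℝ) - 1) / (2 * (n : ℝ)) < φ x → φ x ≤ (2 * (i : ℝ) + 1) / (2 * (n : ℝ)) →
      ψ x = (i : ℝ) / (n : ℝ)) ∧
  (∀ x : ℝ, (2 * (n : ℝ) - 1) / (2 * (n : ℝ)) < φ x → ψ x = 1)


/-- Closed form for the approximation: ψ x = ⌈n·φ x − 1/2⌉ / n. -/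
lemma psi_closed_form (n : ℕ) (hn : 1 < n) (φ ψ : ℝ → ℝ)
    (hφrange : ∀ x : ℝ, φ x ∈ Set.Icc (0 : ℝ) 1) (hψ : IsApprox n φ ψ) (x : ℝ) :
    ψ x = ((⌈(n : ℝ) * φ x - 1/2⌉ : ℤ) : ℝ) / (n : ℝ) := by
  obtain ⟨h0, hmid, h1⟩ := hψ
  obtain ⟨hx0, hx1⟩ := hφrange x
  have hnR : (0 : ℝ) < (n : ℝ) := by exact_mod_cast Nat.zero_lt_of_lt hn
  have hca : (n : ℝ) * φ x - 1/2 ≤ (⌈(n : ℝ) * φ x - 1/2⌉ : ℤ) :=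
    Int.le_ceil _
  have hca' : ((⌈(n : ℝ) * φ x - 1/2⌉ : ℤ) : ℝ) < (n : ℝ) * φ x - 1/2 + 1 :=
    Int.ceil_lt_add_one _
  set c : ℤ := ⌈(n : ℝ) * φ x - 1/2⌉ with hc
  have hc0 : 0 ≤ c := by
    have h1' : (-1 : ℝ) < (c : ℝ) := by nlinarith
    have : (-1 : ℤ) < c := by exact_mod_cast h1'
    omega
  have hcn : c ≤ (n : ℤ) := by
    have : ((c : ℤ) : ℝ) ≤ (n : ℝ) + 1/2 := by nlinarith
    have h2 : (c : ℝ) < (n : ℝ) + 1 := by linarith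
    exact_mod_cast Int.lt_add_one_iff.mp (by exact_mod_cast h2)
  rcases eq_or_lt_of_le hc0 with h0c | h0c
  · -- c = 0
    have ha0 : (n : ℝ) * φ x - 1/2 ≤ 0 := by
      rw [← h0c] at hca; exact_mod_cast hca
    have hx : φ x ≤ 1 / (2 * (n : ℝ)) := by
      rw [le_div_iff₀ (by positivity)]; nlinarith
    rw [h0 x hx, ← h0c]
    simp
  · rcases eq_or_lt_of_le hcn with hcn' | hcn'
    · -- c = n
      have han : (n : ℝ) - 1 < (n : ℝ) * φ x - 1/2 := by
        have : ((n : ℤ) : ℝ) < (n : ℝ) * φ x - 1/2 + 1 := by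
          rw [← hcn']; exact hca'
        push_cast at this; linarith
      have hx : (2 * (n : ℝ) - 1) / (2 * (n : ℝ)) < φ x := by
        rw [div_lt_iff₀ (by positivity)]; nlinarith
      rw [h1 x hx, hcn']
      push_cast
      field_simp
    · -- 0 < c < n
      set i : ℕ := c.toNat with hi
      have hci : (c : ℝ) = (i : ℝ) := by
        exact_mod_cast (Int.toNat_of_nonneg hc0).symm
      have hipos : 0 < i := by omega
      have hilt : i < n := by omega
      have hlo : (2 * (i : ℝ) - 1) / (2 * (n : ℝ)) < φ x := by
        rw [div_lt_iff₀ (by positivity)]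
        rw [hci] at hca'
        nlinarith
      have hhi : φ x ≤ (2 * (i : ℝ) + 1) / (2 * (n : ℝ)) := by
        rw [le_div_iff₀ (by positivity)]
        rw [hci] at hca
        nlinarith
      rw [hmid x i hipos hilt hlo hhi, hci]

/-- Let φ : ℝ → [0,1] be monotonically non-decreasing and φ_n its approximation
into C_n. Then every φ_n-coherent multipreference model of a weighted G_n LC
knowledge base K is a faithful multipreference model of K. -/
theorem phinCoherent_implies_faithful_godel
    {NC NI Δ : Type} [Nonempty Δ] (n : ℕ) (hn : 1 < n) (K : WKB NC NI)
    (φ ψ : ℝ → ℝ) (hφrange : ∀ x : ℝ, φ x ∈ Set.Icc (0 : ℝ) 1)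
    (hφmono : Monotone φ) (hψ : IsApprox n φ ψ)
    (val : NC → Δ → ℝ) (ind : NI → Δ)
    (h : IsPhiCoherentModelG n K ψ val ind) :
    IsFaithfulModelG n K val ind := by
  obtain ⟨hint, htb, hab, hcoh⟩ := h
  refine ⟨hint, htb, hab, ?_⟩
  have hnR : (0 : ℝ) < (n : ℝ) := by exact_mod_cast Nat.zero_lt_of_lt hn
  have hcf := psi_closed_form n hn φ ψ hφrange hψ
  have hψmono : Monotone ψ := by
    intro a b hab'
    rw [hcf a, hcf b]
    have hcc : (⌈(n : ℝ) * φ a - 1/2⌉ : ℤ) ≤ ⌈(n : ℝ) * φ b - 1/2⌉ :=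
      Int.ceil_le_ceil (by nlinarith [hφmono hab'])
    have hcc' : ((⌈(n : ℝ) * φ a - 1/2⌉ : ℤ) : ℝ) ≤ ((⌈(n : ℝ) * φ b - 1/2⌉ : ℤ) : ℝ) := by
      exact_mod_cast hcc
    exact div_le_div_of_nonneg_right hcc' hnR.le
  have hψnonneg : ∀ a : ℝ, 0 ≤ ψ a := by
    intro a
    rw [hcf a]
    have hc0 : (0 : ℤ) ≤ ⌈(n : ℝ) * φ a - 1/2⌉ := by
      have hle := Int.le_ceil ((n : ℝ) * φ a - 1/2)
      have h1' : (-1 : ℝ) < ((⌈(n : ℝ) * φ a - 1/2⌉ : ℤ) : ℝ) := by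
        nlinarith [(hφrange a).1, hnR]
      have : (-1 : ℤ) < ⌈(n : ℝ) * φ a - 1/2⌉ := by exact_mod_cast h1'
      omega
    apply div_nonneg _ hnR.le
    exact_mod_cast hc0
  intro i x y hxy
  have hx := hcoh i x
  have hy := hcoh i y
  have hsum : sumwG K val i y < sumwG K val i x := by
    by_contra hle
    push_neg at hle
    have := hψmono hle
    rw [← hx, ← hy] at this
    linarith
  have hxpos : 0 < gval val (K.Ci i) x := by
    rw [hx]
    have := hψnonneg (sumwG K val i y)
    rw [hx, hy] at hxy
    linarith
  rw [WgtG, WgtG, if_pos hxpos]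
  by_cases hypos : 0 < gval val (K.Ci i) y
  · rw [if_pos hypos]
    exact_mod_cast hsum
  · rw [if_neg hypos]
    exact EReal.bot_lt_coe _
end

section
/- Let K be a weighted G_n LC knowledge base, let φ : ℝ → [0,1], let I_0 be a φ-coherent model of K, and let (I_j)_{j∈J} be a (possibly empty) family of φ-coherent models of K. Define the interpretation I* whose domain is the disjoint union of the domains of I_0 and of all I_j, in which each individual name is interpreted as its interpretation in I_0 (regarded in the I_0-component) and each concept name is interpreted pointwise as in the component an element comes from. Then I* is a φ-coherent model of K. -/
lemma Cn_finite (n : ℕ) : (Cn n).Finite := by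
  have h : Cn n ⊆ (fun i : ℕ => (i : ℝ) / n) '' (Set.Iic n) := by
    rintro r ⟨i, hi, rfl⟩; exact ⟨i, hi, rfl⟩
  exact ((Set.finite_Iic n).image _).subset h

lemma mem_Cn_icc {n : ℕ} (hn : 1 ≤ n) {r : ℝ} (hr : r ∈ Cn n) : r ∈ Set.Icc (0 : ℝ) 1 := by
  obtain ⟨i, hi, rfl⟩ := hr
  have hnp : (0 : ℝ) < n := by exact_mod_cast hn
  constructor
  · positivity
  · rw [div_le_one hnp]; exact_mod_cast hi

lemma gval_mem_Cn {NC Δ : Type} {n : ℕ} (hn : 1 ≤ n) {val : NC → Δ → ℝ}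
    (hv : IsInterp n val) : ∀ (C : LC NC) (x : Δ), gval val C x ∈ Cn n := by
  have hn0 : (n : ℝ) ≠ 0 := by exact_mod_cast (by omega : n ≠ 0)
  have h0 : (0 : ℝ) ∈ Cn n := ⟨0, Nat.zero_le n, by simp⟩
  have h1 : (1 : ℝ) ∈ Cn n := ⟨n, le_refl n, by rw [div_self hn0]⟩
  intro C x
  induction C with
  | top => exact h1
  | bot => exact h0
  | nm A => exact hv A x
  | inter C D hC hD =>
    rcases min_choice (gval val C x) (gval val D x) with h | h <;>
      simp only [gval, h] <;> assumption
  | union C D hC hD =>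
    rcases max_choice (gval val C x) (gval val D x) with h | h <;>
      simp only [gval, h] <;> assumption
  | compl C hC =>
    obtain ⟨i, hi, he⟩ := hC
    refine ⟨n - i, Nat.sub_le n i, ?_⟩
    simp only [gval, he]
    rw [Nat.cast_sub hi]
    field_simp

lemma gimp_mem_Cn {n : ℕ} (hn : 1 ≤ n) {a b : ℝ} (hb : b ∈ Cn n) : gimp a b ∈ Cn n := by
  have hn0 : (n : ℝ) ≠ 0 := by exact_mod_cast (by omega : n ≠ 0)
  unfold gimp
  split
  · exact ⟨n, le_refl n, by rw [div_self hn0]⟩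
  · exact hb

lemma gval_inl {NC Δ0 : Type} {J : Type} {Δ : J → Type}
    (val0 : NC → Δ0 → ℝ) (valj : (j : J) → NC → Δ j → ℝ) (C : LC NC) (x : Δ0) :
    gval (fun A : NC => Sum.elim (val0 A) (fun p : Σ j : J, Δ j => valj p.1 A p.2)) C
        (Sum.inl x) = gval val0 C x := by
  induction C <;> simp [gval, *]

lemma gval_inr {NC Δ0 : Type} {J : Type} {Δ : J → Type}
    (val0 : NC → Δ0 → ℝ) (valj : (j : J) → NC → Δ j → ℝ) (C : LC NC) (j : J) (y : Δ j) :
    gval (fun A : NC => Sum.elim (val0 A) (fun p : Σ j : J, Δ j => valj p.1 A p.2)) C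
        (Sum.inr ⟨j, y⟩ : Δ0 ⊕ (Σ j : J, Δ j)) = gval (valj j) C y := by
  induction C <;> simp [gval, *]

/-- The disjoint union of a φ-coherent model I_0 of K with a (possibly empty)
family of φ-coherent models (I_j), interpreting individual names in the
I_0-component and concept names pointwise componentwise, is again a φ-coherent
model of K. -/
theorem disjoint_union_of_phiCoherent_models
    {NC NI : Type} (n : ℕ) (hn : 1 ≤ n) (K : WKB NC NI)
    (φ : ℝ → ℝ) (hφ : ∀ x : ℝ, φ x ∈ Set.Icc (0 : ℝ) 1)
    (Δ0 : Type) [Nonempty Δ0] (val0 : NC → Δ0 → ℝ) (ind0 : NI → Δ0)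
    (J : Type) (Δ : J → Type) [∀ j, Nonempty (Δ j)]
    (valj : (j : J) → NC → Δ j → ℝ) (indj : (j : J) → NI → Δ j)
    (h0 : IsPhiCoherentModelG n K φ val0 ind0)
    (hj : ∀ j : J, IsPhiCoherentModelG n K φ (valj j) (indj j)) :
    IsPhiCoherentModelG n K φ
      (fun A : NC => Sum.elim (val0 A) (fun p : Σ j : J, Δ j => valj p.1 A p.2))
      (fun a : NI => (Sum.inl (ind0 a) : Δ0 ⊕ (Σ j : J, Δ j))) := by
  obtain ⟨hI0, hT0, hA0, hC0⟩ := h0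
  set V : NC → (Δ0 ⊕ (Σ j : J, Δ j)) → ℝ :=
    fun A : NC => Sum.elim (val0 A) (fun p : Σ j : J, Δ j => valj p.1 A p.2) with hV
  have hIV : IsInterp n V := by
    intro A x
    rcases x with x | ⟨j, y⟩
    · exact hI0 A x
    · exact (hj j).1 A y
  have hsum0 : ∀ (i : Fin K.k) (x : Δ0),
      sumwG K V i (Sum.inl x) = sumwG K val0 i x := by
    intro i x
    unfold sumwG
    exact Finset.sum_congr rfl fun h _ => by rw [hV, gval_inl]
  have hsumj : ∀ (i : Fin K.k) (j : J) (y : Δ j),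
      sumwG K V i (Sum.inr ⟨j, y⟩) = sumwG K (valj j) i y := by
    intro i j y
    unfold sumwG
    exact Finset.sum_congr rfl fun h _ => by rw [hV, gval_inr]
  refine ⟨hIV, ?_, ?_, ?_⟩
  · -- TBox
    intro t ht
    set f : (Δ0 ⊕ (Σ j : J, Δ j)) → ℝ :=
      fun p => gimp (gval V t.1 p) (gval V t.2.1 p) with hf
    have hf0 : ∀ x : Δ0, f (Sum.inl x) = gimp (gval val0 t.1 x) (gval val0 t.2.1 x) := by
      intro x; rw [hf]; simp only [hV, gval_inl]
    have hfj : ∀ (j : J) (y : Δ j),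
        f (Sum.inr ⟨j, y⟩) = gimp (gval (valj j) t.1 y) (gval (valj j) t.2.1 y) := by
      intro j y; rw [hf]; simp only [hV, gval_inr]
    have hfCn : ∀ p, f p ∈ Cn n := fun p =>
      gimp_mem_Cn hn (gval_mem_Cn hn hIV t.2.1 p)
    have hbddf : BddBelow (Set.range f) := by
      refine ⟨0, ?_⟩
      rintro r ⟨p, rfl⟩
      exact (mem_Cn_icc hn (hfCn p)).1
    have hbdd0 : BddBelow (Set.range fun x : Δ0 =>
        gimp (gval val0 t.1 x) (gval val0 t.2.1 x)) := by
      refine ⟨0, ?_⟩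
      rintro r ⟨x, rfl⟩
      exact (mem_Cn_icc hn (gimp_mem_Cn hn (gval_mem_Cn hn hI0 t.2.1 x))).1
    have hbddj : ∀ j : J, BddBelow (Set.range fun y : Δ j =>
        gimp (gval (valj j) t.1 y) (gval (valj j) t.2.1 y)) := by
      intro j
      refine ⟨0, ?_⟩
      rintro r ⟨y, rfl⟩
      exact (mem_Cn_icc hn (gimp_mem_Cn hn (gval_mem_Cn hn (hj j).1 t.2.1 y))).1
    -- the infimum of f is attained since f has finite range
    have hattain : ∃ p, (⨅ q, f q) = f p := by
      have hfin : (Set.range f).Finite := (Cn_finite n).subset (Set.range_subset_iff.2 hfCn)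
      have hne : (Set.range f).Nonempty := Set.range_nonempty f
      have := hne.csInf_mem hfin
      obtain ⟨p, hp⟩ := this
      exact ⟨p, by rw [← sInf_range, hp]⟩
    have hle0 : (⨅ q, f q) ≤ ⨅ x : Δ0, gimp (gval val0 t.1 x) (gval val0 t.2.1 x) := by
      refine le_ciInf fun x => ?_
      rw [← hf0 x]
      exact ciInf_le hbddf (Sum.inl x)
    have hT0' := hT0 t ht
    have hTj' := fun j => (hj j).2.1 t ht
    rcases hθ : t.2.2.1 with _ | _ | _ | _
    · -- ≥
      rw [hθ] at hT0' hTj'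
      refine le_ciInf fun p => ?_
      rcases p with x | ⟨j, y⟩
      · rw [hf0 x]; exact hT0'.trans (ciInf_le hbdd0 x)
      · rw [hfj j y]; exact (hTj' j).trans (ciInf_le (hbddj j) y)
    · -- ≤
      rw [hθ] at hT0'
      exact hle0.trans hT0'
    · -- >
      rw [hθ] at hT0' hTj'
      obtain ⟨p, hp⟩ := hattain
      rw [show Ineq.holds Ineq.gt (⨅ q, f q) t.2.2.2 ↔ t.2.2.2 < ⨅ q, f q from Iff.rfl, hp]
      rcases p with x | ⟨j, y⟩
      · rw [hf0 x]; exact hT0'.trans_le (ciInf_le hbdd0 x)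
      · rw [hfj j y]; exact (hTj' j).trans_le (ciInf_le (hbddj j) y)
    · -- <
      rw [hθ] at hT0'
      exact hle0.trans_lt hT0'
  · -- ABox
    intro t ht
    have := hA0 t ht
    simpa only [hV, gval_inl] using this
  · -- φ-coherence
    intro i x
    rcases x with x | ⟨j, y⟩
    · rw [hV, gval_inl, hsum0]; exact hC0 i x
    · rw [hV, gval_inr, hsumj]; exact (hj j).2.2.2 i y
end
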